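/- Let n ≥ 1 be a fixed integer and let 1 ≤ a < b be real numbers. Then there exists a constant C > 0, depending only on n, such that ∑ (ℓ + ℓ') ≤ C·b·(b − a + log(b + 1)), where the sum ranges over all pairs (ℓ, ℓ') ∈ ℕ² with a < λ_{ℓ,ℓ'} ≤ b. -/

import Mathlib

/-!
Since `λ_{ℓ,ℓ'} = (2ℓ + n)ℓ' + nℓ`, for fixed `ℓ` the admissible `ℓ'` lie in an arithmetic
progression of step `2ℓ + n ≥ ℓ + 1` inside `(a, b]`: there are at most `(b - a)/(2ℓ + n) + 1`
of them, and each satisfies `ℓ' ≤ b/(2ℓ + n)`. By the symmetry `ℓ ↔ ℓ'` the sum of `ℓ + ℓ'`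
is twice the sum of `ℓ'`, hence at most `2b ∑_{ℓ ≤ b} ((b - a)/(ℓ + 1)² + 1/(ℓ + 1))`, and
`∑ 1/(ℓ + 1)² ≤ 2`, `∑_{ℓ ≤ b} 1/(ℓ + 1) ≤ 1 + log (b + 1)` give the bound with `C = 6`.
-/
open Finset

theorem card_filter_mem_Ioc_le (s : Finset ℕ) {x y : ℝ} (hxy : x ≤ y) :
    (#{m ∈ s | x < ((m : ℕ) : ℝ) ∧ (m : ℝ) ≤ y} : ℝ) ≤ y - x + 1 := by
  have hsub : #{m ∈ s | x < ((m : ℕ) : ℝ) ∧ (m : ℝ) ≤ y} ≤ #(Ioc ⌊x⌋ ⌊y⌋) := by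
    refine card_le_card_of_injOn (fun m : ℕ => (m : ℤ)) (fun m hm => ?_) Nat.cast_injective.injOn
    obtain ⟨-, hxm, hmy⟩ := mem_filter.1 hm
    simp only [coe_Ioc, Set.mem_Ioc, Int.floor_lt, Int.le_floor]
    exact ⟨by exact_mod_cast hxm, by exact_mod_cast hmy⟩
  have hfloor : ⌊x⌋ ≤ ⌊y⌋ := Int.floor_mono hxy
  calc (#{m ∈ s | x < ((m : ℕ) : ℝ) ∧ (m : ℝ) ≤ y} : ℝ) ≤ #(Ioc ⌊x⌋ ⌊y⌋) := by
        exact_mod_cast hsub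
    _ = (⌊y⌋ : ℝ) - ⌊x⌋ := by
      rw [Int.card_Ioc, ← Int.cast_natCast, Int.toNat_of_nonneg (by omega)]
      push_cast; ring
    _ ≤ y - x + 1 := by linarith [Int.floor_le y, Int.sub_one_lt_floor x]

theorem card_filter_affine_mem_Ioc_le (s : Finset ℕ) {d : ℝ} (hd : 0 < d) (c : ℝ) {a b : ℝ}
    (hab : a ≤ b) :
    (#{m ∈ s | a < d * ((m : ℕ) : ℝ) + c ∧ d * m + c ≤ b} : ℝ) ≤ (b - a) / d + 1 := by
  have hiff : ∀ m : ℕ, (a < d * m + c ∧ d * m + c ≤ b) ↔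
      ((a - c) / d < m ∧ (m : ℝ) ≤ (b - c) / d) := fun m => by
    rw [div_lt_iff₀' hd, le_div_iff₀' hd]
    constructor <;> rintro ⟨h₁, h₂⟩ <;> constructor <;> linarith
  rw [filter_congr fun m _ => hiff m]
  calc _ ≤ (b - c) / d - (a - c) / d + 1 :=
        card_filter_mem_Ioc_le s (div_le_div_of_nonneg_right (by linarith) hd.le)
    _ = (b - a) / d + 1 := by ring

theorem sum_range_inv_succ_sq_le_two (K : ℕ) : ∑ ℓ ∈ range K, (((ℓ : ℝ) + 1) ^ 2)⁻¹ ≤ 2 := by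
  have h := sum_Ioo_inv_sq_le (α := ℝ) 0 (K + 1)
  rw [← Ico_add_one_left_eq_Ioo, ← sum_Ico_add' fun i : ℕ => ((i : ℝ) ^ 2)⁻¹] at h
  simp only [zero_add, Nat.cast_add, Nat.cast_one, Nat.cast_zero, div_one] at h
  rwa [range_eq_Ico]

theorem sum_range_inv_succ_le_one_add_log (K : ℕ) :
    ∑ ℓ ∈ range K, ((ℓ : ℝ) + 1)⁻¹ ≤ 1 + Real.log K := by
  simpa [harmonic] using harmonic_le_one_add_log K

theorem sum_snd_eq_sum_fst {α M : Type*} [AddCommMonoid M] (s : Finset (α × α))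
    (hs : ∀ p ∈ s, p.swap ∈ s) (f : α → M) : ∑ p ∈ s, f p.2 = ∑ p ∈ s, f p.1 :=
  sum_nbij' Prod.swap Prod.swap hs hs (fun _ _ => rfl) (fun _ _ => rfl) (fun _ _ => rfl)

def sublaplacianEigenvalue (n ℓ ℓ' : ℕ) : ℕ := 2 * ℓ * ℓ' + n * (ℓ + ℓ')

theorem sublaplacianEigenvalue_comm (n ℓ ℓ' : ℕ) :
    sublaplacianEigenvalue n ℓ ℓ' = sublaplacianEigenvalue n ℓ' ℓ := by
  unfold sublaplacianEigenvalue; ring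

theorem cast_sublaplacianEigenvalue (n ℓ ℓ' : ℕ) :
    (sublaplacianEigenvalue n ℓ ℓ' : ℝ) = (2 * ℓ + n) * ℓ' + n * ℓ := by
  unfold sublaplacianEigenvalue; push_cast; ring

theorem le_div_of_sublaplacianEigenvalue_le {n : ℕ} (hn : 1 ≤ n) {ℓ ℓ' : ℕ} {b : ℝ}
    (h : (sublaplacianEigenvalue n ℓ ℓ' : ℝ) ≤ b) : (ℓ' : ℝ) ≤ b / (2 * ℓ + n) := by
  rw [cast_sublaplacianEigenvalue] at h
  rw [le_div_iff₀' (by positivity)]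
  have : (0 : ℝ) ≤ n * ℓ := by positivity
  linarith

theorem card_filter_sublaplacianEigenvalue_mem_Ioc_le {n : ℕ} (hn : 1 ≤ n) (s : Finset ℕ)
    (ℓ : ℕ) {a b : ℝ} (hab : a ≤ b) :
    (#{ℓ' ∈ s | a < (sublaplacianEigenvalue n ℓ ℓ' : ℝ) ∧
        (sublaplacianEigenvalue n ℓ ℓ' : ℝ) ≤ b} : ℝ) ≤ (b - a) / (2 * ℓ + n) + 1 := by
  simp only [cast_sublaplacianEigenvalue]
  exact card_filter_affine_mem_Ioc_le s (by positivity) _ hab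

noncomputable def eigenpairsIoc (n K : ℕ) (a b : ℝ) : Finset (ℕ × ℕ) :=
  {p ∈ range K ×ˢ range K | a < (sublaplacianEigenvalue n p.1 p.2 : ℝ) ∧
    (sublaplacianEigenvalue n p.1 p.2 : ℝ) ≤ b}

theorem swap_mem_eigenpairsIoc {n K : ℕ} {a b : ℝ} {p : ℕ × ℕ}
    (hp : p ∈ eigenpairsIoc n K a b) : p.swap ∈ eigenpairsIoc n K a b := by
  simp only [eigenpairsIoc, mem_filter, mem_product, Prod.fst_swap, Prod.snd_swap] at hp ⊢
  rw [sublaplacianEigenvalue_comm]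
  tauto

theorem sum_eigenpairsIoc_fst (n K : ℕ) (a b : ℝ) (g : ℕ → ℝ) :
    ∑ p ∈ eigenpairsIoc n K a b, g p.1 = ∑ ℓ ∈ range K, g ℓ *
      #{ℓ' ∈ range K | a < (sublaplacianEigenvalue n ℓ ℓ' : ℝ) ∧
        (sublaplacianEigenvalue n ℓ ℓ' : ℝ) ≤ b} := by
  simp only [eigenpairsIoc, sum_filter, sum_product, card_filter, Nat.cast_sum, Nat.cast_ite,
    Nat.cast_one, Nat.cast_zero, mul_sum, mul_ite, mul_one, mul_zero]

theorem sum_eigenpairsIoc_le {n : ℕ} (hn : 1 ≤ n) (K : ℕ) (a b : ℝ) :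
    ∑ p ∈ eigenpairsIoc n K a b, ((p.1 + p.2 : ℕ) : ℝ)
      ≤ 2 * ∑ p ∈ eigenpairsIoc n K a b, b / (2 * p.1 + n) := by
  have hsymm := sum_snd_eq_sum_fst (eigenpairsIoc n K a b) (fun _ => swap_mem_eigenpairsIoc)
    fun ℓ : ℕ => (ℓ : ℝ)
  calc ∑ p ∈ eigenpairsIoc n K a b, ((p.1 + p.2 : ℕ) : ℝ)
      = 2 * ∑ p ∈ eigenpairsIoc n K a b, (p.2 : ℝ) := by
        push_cast; rw [sum_add_distrib, hsymm]; ring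
    _ ≤ 2 * ∑ p ∈ eigenpairsIoc n K a b, b / (2 * p.1 + n) := by
        gcongr with p hp
        exact le_div_of_sublaplacianEigenvalue_le hn (mem_filter.1 hp).2.2

theorem sum_range_div_mul_le {n : ℕ} (hn : 1 ≤ n) (K : ℕ) {a b : ℝ} (hb : 0 ≤ b) (hab : a ≤ b) :
    ∑ ℓ ∈ range K, b / (2 * ℓ + n) * ((b - a) / (2 * ℓ + n) + 1)
      ≤ b * (2 * (b - a) + 1 + Real.log K) := by
  have hba : 0 ≤ b * (b - a) := mul_nonneg hb (sub_nonneg.2 hab)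
  have hterm : ∀ ℓ ∈ range K, b / (2 * ℓ + n) * ((b - a) / (2 * ℓ + n) + 1)
      ≤ b * (b - a) * (((ℓ : ℝ) + 1) ^ 2)⁻¹ + b * ((ℓ : ℝ) + 1)⁻¹ := by
    intro ℓ _
    have hle : (ℓ : ℝ) + 1 ≤ 2 * ℓ + n := by
      have : (1 : ℝ) ≤ n := by exact_mod_cast hn
      linarith [(Nat.cast_nonneg ℓ : (0 : ℝ) ≤ ℓ)]
    calc b / (2 * ℓ + n) * ((b - a) / (2 * ℓ + n) + 1)
        = b * (b - a) * ((2 * (ℓ : ℝ) + n) ^ 2)⁻¹ + b * (2 * (ℓ : ℝ) + n)⁻¹ := by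
          rw [← inv_pow]; ring
      _ ≤ b * (b - a) * (((ℓ : ℝ) + 1) ^ 2)⁻¹ + b * ((ℓ : ℝ) + 1)⁻¹ := by gcongr
  calc _ ≤ ∑ ℓ ∈ range K, (b * (b - a) * (((ℓ : ℝ) + 1) ^ 2)⁻¹ + b * ((ℓ : ℝ) + 1)⁻¹) :=
        sum_le_sum hterm
    _ = b * (b - a) * ∑ ℓ ∈ range K, (((ℓ : ℝ) + 1) ^ 2)⁻¹
          + b * ∑ ℓ ∈ range K, ((ℓ : ℝ) + 1)⁻¹ := by
        rw [sum_add_distrib, mul_sum, mul_sum]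
    _ ≤ b * (b - a) * 2 + b * (1 + Real.log K) := by
        gcongr
        exacts [sum_range_inv_succ_sq_le_two K, sum_range_inv_succ_le_one_add_log K]
    _ = b * (2 * (b - a) + 1 + Real.log K) := by ring

theorem sum_between_hyperbolas (n : ℕ) (hn : 1 ≤ n) :
    ∃ C : ℝ, 0 < C ∧ ∀ a b : ℝ, 1 ≤ a → a < b →
      (∑ p ∈ (Finset.range (⌊b⌋₊ + 1) ×ˢ Finset.range (⌊b⌋₊ + 1)).filter
          (fun p => a < ((2 * p.1 * p.2 + n * (p.1 + p.2) : ℕ) : ℝ) ∧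
            ((2 * p.1 * p.2 + n * (p.1 + p.2) : ℕ) : ℝ) ≤ b),
        ((p.1 + p.2 : ℕ) : ℝ))
      ≤ C * b * (b - a + Real.log (b + 1)) := by
  refine ⟨6, by norm_num, fun a b ha hab => ?_⟩
  set K := ⌊b⌋₊ + 1
  have hb : 1 < b := ha.trans_lt hab
  have hlogK : Real.log K ≤ Real.log (b + 1) :=
    Real.log_le_log (by positivity) (by simpa [K] using Nat.floor_le (by positivity : 0 ≤ b))
  have hlog : 1 ≤ 2 * Real.log (b + 1) := by
    linarith [Real.log_two_gt_d9, Real.log_le_log two_pos (by linarith : (2 : ℝ) ≤ b + 1)]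
  change ∑ p ∈ eigenpairsIoc n K a b, ((p.1 + p.2 : ℕ) : ℝ) ≤ _
  calc ∑ p ∈ eigenpairsIoc n K a b, ((p.1 + p.2 : ℕ) : ℝ)
      ≤ 2 * ∑ p ∈ eigenpairsIoc n K a b, b / (2 * p.1 + n) := sum_eigenpairsIoc_le hn K a b
    _ = 2 * ∑ ℓ ∈ range K, b / (2 * ℓ + n) * #{ℓ' ∈ range K |
          a < (sublaplacianEigenvalue n ℓ ℓ' : ℝ) ∧ (sublaplacianEigenvalue n ℓ ℓ' : ℝ) ≤ b} := by
        rw [sum_eigenpairsIoc_fst n K a b fun ℓ => b / (2 * ℓ + n)]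
    _ ≤ 2 * ∑ ℓ ∈ range K, b / (2 * ℓ + n) * ((b - a) / (2 * ℓ + n) + 1) := by
        gcongr with ℓ
        exact card_filter_sublaplacianEigenvalue_mem_Ioc_le hn _ ℓ hab.le
    _ ≤ 2 * (b * (2 * (b - a) + 1 + Real.log K)) := by
        gcongr
        exact sum_range_div_mul_le hn K (by positivity) hab.le
    _ ≤ 6 * b * (b - a + Real.log (b + 1)) := by nlinarith
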